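/- Let p be a prime, ω ∈ ℂ a primitive p-th root of unity, and J ⊆ {0,...,p-1}. Suppose g(x) = ∑_{j∈J} a_j x^j with a_j ∈ ℤ[ω], and g vanishes at ω^i for all i in some set I ⊆ {0,...,p-1} with |I| = |J|. Then the reduction of g modulo the ideal (1-ω), viewed as a polynomial over 𝔽_p via ℤ[ω]/(1-ω) ≅ 𝔽_p, is the zero polynomial. -/

import Mathlib

/-!
Every root `ω ^ i` of `g` reduces to `1` modulo `1 - ω`, and the `ω ^ i` for `i ∈ I` are
distinct, so the reduction `ḡ` is divisible by `(X - 1) ^ |I|` while having at most `|J| = |I|`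
nonzero coefficients, all in degrees `< p`. Over a domain of characteristic `p` such a polynomial
vanishes (Tao): for `j₀` in the support, `X ḡ' - j₀ ḡ` kills the coefficient at `j₀`, scales the
one at `j` by `j - j₀ ≠ 0`, and stays divisible by `(X - 1) ^ (|I| - 1)`, so induction applies.
-/

/-- The subring ℤ[ω] of ℂ. -/
noncomputable def Zomega (ω : ℂ) : Subalgebra ℤ ℂ := Algebra.adjoin ℤ {ω}

/-- ω as an element of ℤ[ω]. -/
noncomputable def omegaEl (ω : ℂ) : Zomega ω :=
  ⟨ω, Algebra.subset_adjoin (Set.mem_singleton ω)⟩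

/-- The principal ideal (1 - ω) of ℤ[ω]. -/
noncomputable def oneSubOmegaIdeal (ω : ℂ) : Ideal (Zomega ω) :=
  Ideal.span {1 - omegaEl ω}

open Polynomial Finset

namespace Polynomial

variable {R : Type*} [CommRing R]

theorem coeff_X_mul_derivative_sub_C_mul (f : R[X]) (c : R) (j : ℕ) :
    (X * derivative f - C c * f).coeff j = ((j : R) - c) * f.coeff j := by
  cases j with
  | zero => simp
  | succ n =>
    simp only [coeff_sub, coeff_X_mul, coeff_derivative, coeff_C_mul]
    push_cast
    ring

theorem support_X_mul_derivative_sub_C_mul_subset (f : R[X]) (j₀ : ℕ) :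
    (X * derivative f - C (j₀ : R) * f).support ⊆ f.support.erase j₀ := by
  intro j hj
  rw [mem_support_iff, coeff_X_mul_derivative_sub_C_mul] at hj
  refine mem_erase.2 ⟨?_, mem_support_iff.2 (right_ne_zero_of_mul hj)⟩
  rintro rfl
  simp at hj

theorem pow_dvd_X_mul_derivative_sub_C_mul {f q : R[X]} {k : ℕ} (c : R) (h : q ^ (k + 1) ∣ f) :
    q ^ k ∣ X * derivative f - C c * f :=
  dvd_sub (dvd_mul_of_dvd_right (pow_sub_one_dvd_derivative_of_pow_dvd h) _)
    (dvd_mul_of_dvd_right ((pow_dvd_pow q k.le_succ).trans h) _)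

theorem eq_zero_of_X_sub_one_dvd_of_card_support_le_one {f : R[X]} (hdvd : X - 1 ∣ f)
    (hcard : #f.support ≤ 1) : f = 0 := by
  obtain ⟨n, c, rfl⟩ := card_support_le_one_iff_monomial.1 hcard
  rw [← C_1, dvd_iff_isRoot, IsRoot, eval_monomial, one_pow, mul_one] at hdvd
  rw [hdvd, monomial_zero_right]

theorem eq_zero_of_X_sub_one_pow_dvd [IsDomain R] (p : ℕ) [CharP R p] (k : ℕ) {f : R[X]}
    (hlt : ∀ j ∈ f.support, j < p) (hcard : #f.support ≤ k) (hdvd : (X - 1) ^ k ∣ f) :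
    f = 0 := by
  induction k generalizing f with
  | zero => exact support_eq_empty.1 (card_eq_zero.1 (Nat.le_zero.1 hcard))
  | succ k ih =>
    obtain h | ⟨j₀, hj₀⟩ := f.support.eq_empty_or_nonempty
    · exact support_eq_empty.1 h
    set g := X * derivative f - C (j₀ : R) * f
    have hg_supp : g.support ⊆ f.support.erase j₀ := support_X_mul_derivative_sub_C_mul_subset f j₀
    have hg : g = 0 := by
      refine ih (fun j hj => hlt j (erase_subset _ _ (hg_supp hj))) ?_
        (pow_dvd_X_mul_derivative_sub_C_mul _ hdvd)
      have := card_le_card hg_supp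
      rw [card_erase_of_mem hj₀] at this
      omega
    have hf_supp : f.support ⊆ {j₀} := by
      intro j hj
      by_contra hne
      have hj_ne : (j : R) - j₀ ≠ 0 := sub_ne_zero.2 fun h =>
        hne (mem_singleton.2 (CharP.natCast_injOn_Iio R p (hlt j hj) (hlt j₀ hj₀) h))
      have := congrArg (coeff · j) hg
      simp only [g, coeff_X_mul_derivative_sub_C_mul, coeff_zero] at this
      exact mem_support_iff.1 hj ((mul_eq_zero.1 this).resolve_left hj_ne)
    exact eq_zero_of_X_sub_one_dvd_of_card_support_le_one
      ((dvd_pow_self _ k.succ_ne_zero).trans hdvd) ((card_le_card hf_supp).trans_eq (card_singleton j₀))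

theorem prod_X_sub_C_dvd_of_isRoot [IsDomain R] {ι : Type*} {s : Finset ι} {x : ι → R}
    (hx : Set.InjOn x s) {f : R[X]} (hf : ∀ i ∈ s, f.IsRoot (x i)) :
    ∏ i ∈ s, (X - C (x i)) ∣ f := by
  rcases eq_or_ne f 0 with rfl | hf0
  · exact dvd_zero _
  have hnodup : (s.val.map x).Nodup := s.nodup.map_on hx
  have hle : s.val.map x ≤ f.roots := (Multiset.le_iff_subset hnodup).2 fun r hr => by
    obtain ⟨i, hi, rfl⟩ := Multiset.mem_map.1 hr
    exact (mem_roots hf0).2 (hf i hi)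
  have := (Multiset.prod_X_sub_C_dvd_iff_le_roots hf0 _).2 hle
  rwa [Multiset.map_map] at this

theorem map_prod_X_sub_C_pow {S : Type*} [CommRing S] (φ : R →+* S) {x : R} (hx : φ x = 1)
    (s : Finset ℕ) : (∏ i ∈ s, (X - C (x ^ i))).map φ = (X - 1) ^ #s := by
  simp [Polynomial.map_prod, hx]

theorem support_sum_C_mul_X_pow_subset (s : Finset ℕ) (a : ℕ → R) :
    (∑ j ∈ s, C (a j) * X ^ j).support ⊆ s := by
  intro n hn
  by_contra hns
  refine mem_support_iff.1 hn ?_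
  simp only [finsetSum_coeff, coeff_C_mul_X_pow]
  exact sum_eq_zero fun j hj => if_neg fun h : n = j => hns (h ▸ hj)

end Polynomial

@[simp]
theorem coe_omegaEl (ω : ℂ) : (omegaEl ω : ℂ) = ω := rfl

theorem mk_omegaEl_eq_one (ω : ℂ) : Ideal.Quotient.mk (oneSubOmegaIdeal ω) (omegaEl ω) = 1 := by
  rw [← map_one (Ideal.Quotient.mk _), Ideal.Quotient.eq, ← neg_sub]
  exact neg_mem (Ideal.subset_span rfl)

theorem reduction_zero (p : ℕ) (hp : p.Prime) (ω : ℂ) (hω : IsPrimitiveRoot ω p)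
    (I J : Finset ℕ) (hI : I ⊆ Finset.range p) (hJ : J ⊆ Finset.range p)
    (hcard : I.card = J.card) (a : ℕ → Zomega ω)
    (g : Polynomial (Zomega ω))
    (hg : g = ∑ j ∈ J, Polynomial.C (a j) * Polynomial.X ^ j)
    (hvan : ∀ i ∈ I, ∑ j ∈ J, ((a j : ℂ) * (ω ^ i) ^ j) = 0)
    (e : ((Zomega ω) ⧸ oneSubOmegaIdeal ω) ≃+* ZMod p) :
    g.map (e.toRingHom.comp (Ideal.Quotient.mk (oneSubOmegaIdeal ω))) = 0 := by
  have := Fact.mk hp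
  set φ := e.toRingHom.comp (Ideal.Quotient.mk (oneSubOmegaIdeal ω))
  have hφ : φ (omegaEl ω) = 1 := by simp [φ, mk_omegaEl_eq_one]
  have hinj : Set.InjOn (omegaEl ω ^ ·) I := fun i hi j hj h =>
    hω.pow_inj (mem_range.1 (hI hi)) (mem_range.1 (hI hj)) (by simpa using congrArg Subtype.val h)
  have hroot : ∀ i ∈ I, g.IsRoot (omegaEl ω ^ i) := fun i hi => by
    apply Subtype.val_injective
    simpa [hg, eval_finsetSum] using hvan i hi
  have hsupp : (g.map φ).support ⊆ J :=
    (support_map_subset φ g).trans (hg ▸ support_sum_C_mul_X_pow_subset J a)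
  refine eq_zero_of_X_sub_one_pow_dvd p #J (fun j hj => mem_range.1 (hJ (hsupp hj)))
    (card_le_card hsupp) ?_
  rw [← hcard, ← map_prod_X_sub_C_pow φ hφ I]
  exact Polynomial.map_dvd φ (prod_X_sub_C_dvd_of_isRoot hinj hroot)
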